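/- Let H be a pseudoexpander with m = |Roots(H)|. For any pseudoedge {t_i,t_j} of H, the probability in the probability space on SAT(H) that a random satisfying assignment respects {t_i,t_j} satisfies Pr(X_{i,j} = 1) ≥ (3/128)·m^(−4/4.9). -/

import Mathlib

open scoped Classical

namespace NBPPaper

/-! ### Literals and assignments.
A literal is a pair `(x, b)` of a variable and a polarity (`true` = positive literal).
A set of literals is a `Finset (Var × Bool)`. -/

/-- A set of literals is consistent: no variable occurs both positively and negatively. -/
def Consistent {Var : Type} (S : Finset (Var × Bool)) : Prop :=
  ∀ x : Var, ¬((x, true) ∈ S ∧ (x, false) ∈ S)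

/-- `S` is a set of literals over the variable set `W`. -/
def LitsOver {Var : Type} (W : Finset Var) (S : Finset (Var × Bool)) : Prop :=
  Consistent S ∧ ∀ l ∈ S, l.1 ∈ W

/-- `S` is an assignment of exactly the variables of `W`:
it contains exactly one literal of each variable of `W` and nothing else. -/
def AssignsExactly {Var : Type} (W : Finset Var) (S : Finset (Var × Bool)) : Prop :=
  (∀ l ∈ S, l.1 ∈ W) ∧ ∀ x ∈ W, ∃! b : Bool, (x, b) ∈ S

/-- Satisfaction of a CNF, given as a set of clauses (each clause a set of literals):
every clause contains a literal of `S`. -/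
def SatCNF {V : Type} (φ : Set (Finset (V × Bool))) (S : Finset (V × Bool)) : Prop :=
  ∀ C ∈ φ, ∃ l ∈ C, l ∈ S

/-! ### Nondeterministic branching programs -/

/-- An edge of a nondeterministic branching program over variable type `Var`
with vertex set `Fin n`.  `lab = none` means the edge is unlabelled; the field
`id` allows parallel edges (multigraph). -/
structure NBPEdge (Var : Type) (n : ℕ) where
  src : Fin n
  dst : Fin n
  lab : Option (Var × Bool)
  id : ℕ
deriving DecidableEq

/-- A nondeterministic branching program: a finite DAG (the vertices `Fin n` are
listed in a topological order, i.e. every edge increases the index) with a single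
source (the only vertex with no incoming edge) and a single sink (the only vertex
with no outgoing edge). -/
structure NBP (Var : Type) where
  n : ℕ
  edges : Finset (NBPEdge Var n)
  source : Fin n
  sink : Fin n
  acyc : ∀ e ∈ edges, e.src < e.dst
  source_no_in : ∀ e ∈ edges, e.dst ≠ source
  sink_no_out : ∀ e ∈ edges, e.src ≠ sink
  only_source : ∀ v : Fin n, v ≠ source → ∃ e ∈ edges, e.dst = v
  only_sink : ∀ v : Fin n, v ≠ sink → ∃ e ∈ edges, e.src = v

variable {Var : Type}

/-- The set of literals labelling the edges of a path (a list of edges). -/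
def pathLits [DecidableEq Var] {n : ℕ} (p : List (NBPEdge Var n)) : Finset (Var × Bool) :=
  (p.filterMap NBPEdge.lab).toFinset

/-- The set of variables occurring (as edge labels) on a path. -/
def pathVars [DecidableEq Var] {n : ℕ} (p : List (NBPEdge Var n)) : Finset Var :=
  ((p.filterMap NBPEdge.lab).map Prod.fst).toFinset

/-- The set of vertices visited by a path. -/
def pathVertices {n : ℕ} (p : List (NBPEdge Var n)) : Finset (Fin n) :=
  (p.map NBPEdge.src).toFinset ∪ (p.map NBPEdge.dst).toFinset

/-- The number of occurrences of the variable `x` as an edge label on the path `p`. -/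
def occCount [DecidableEq Var] {n : ℕ} (x : Var) (p : List (NBPEdge Var n)) : ℕ :=
  (p.filterMap NBPEdge.lab).countP (fun l => decide (l.1 = x))

namespace NBP

/-- `p` is a directed path of `Z` from vertex `u` to vertex `v`. -/
def IsPathFrom (Z : NBP Var) (u v : Fin Z.n) (p : List (NBPEdge Var Z.n)) : Prop :=
  p ≠ [] ∧ (∀ e ∈ p, e ∈ Z.edges) ∧ List.Chain' (fun e f => e.dst = f.src) p ∧
    p.head?.map NBPEdge.src = some u ∧ p.getLast?.map NBPEdge.dst = some v

/-- `p` is a source-sink path of `Z`. -/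
def IsSourceSink (Z : NBP Var) (p : List (NBPEdge Var Z.n)) : Prop :=
  Z.IsPathFrom Z.source Z.sink p

/-- A computational path: a source-sink path carrying no two opposite literals. -/
def IsCompPath [DecidableEq Var] (Z : NBP Var) (p : List (NBPEdge Var Z.n)) : Prop :=
  Z.IsSourceSink p ∧ Consistent (pathLits p)

/-- The set `Vars(Z)` of variables whose literals occur on edges of `Z`. -/
def vars [DecidableEq Var] (Z : NBP Var) : Finset Var :=
  Z.edges.biUnion (fun e => (e.lab.map Prod.fst).toFinset)

/-- `Z` is a (syntactic) read-`d`-times NBP. -/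
def ReadTimes [DecidableEq Var] (Z : NBP Var) (d : ℕ) : Prop :=
  ∀ p, Z.IsSourceSink p → ∀ x : Var, occCount x p ≤ d

/-- `Z` is a uniform read-`d`-times NBP: every variable of `Z` occurs exactly `d`
times on every source-sink path. -/
def UniformReadTimes [DecidableEq Var] (Z : NBP Var) (d : ℕ) : Prop :=
  Z.ReadTimes d ∧ ∀ p, Z.IsSourceSink p → ∀ x ∈ Z.vars, occCount x p = d

/-- `Z` computes the Boolean function with variable set `W` whose satisfying
(total) assignments are described by the predicate `F`. -/
def Computes [DecidableEq Var] (Z : NBP Var) (W : Finset Var)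
    (F : Finset (Var × Bool) → Prop) : Prop :=
  Z.vars = W ∧ ∀ S, AssignsExactly W S → (F S ↔ ∃ p, Z.IsCompPath p ∧ pathLits p ⊆ S)

end NBP

/-- `parts` is the partition of the path `p` generated by the vertex set `X`:
`p` is cut into `|X| + 1` consecutive nonempty subpaths whose cut points are
exactly the vertices of `X`. -/
def GeneratesPartition {n : ℕ} (X : Finset (Fin n)) (p : List (NBPEdge Var n))
    (parts : List (List (NBPEdge Var n))) : Prop :=
  p = parts.flatten ∧ parts.length = X.card + 1 ∧ (∀ q ∈ parts, q ≠ []) ∧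
    (parts.dropLast.filterMap (fun q => q.getLast?.map NBPEdge.dst)).toFinset = X

/-- Variables of `Y₁` occur only on parts with even (0-based) index, i.e. odd-numbered
subpaths, and variables of `Y₂` only on parts with odd (0-based) index. -/
def OddEvenSplit [DecidableEq Var] {n : ℕ} (parts : List (List (NBPEdge Var n)))
    (Y₁ Y₂ : Finset Var) : Prop :=
  ∀ k : ℕ, ∀ x ∈ pathVars (parts.getD k []),
    (x ∈ Y₁ → k % 2 = 0) ∧ (x ∈ Y₂ → k % 2 = 1)

/-- The set `X` of vertices of `Z` (containing neither source nor sink) separates the two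
disjoint subsets `Y₁, Y₂` of `Vars(Z)`. -/
def NBP.Separates [DecidableEq Var] (Z : NBP Var) (X : Finset (Fin Z.n))
    (Y₁ Y₂ : Finset Var) : Prop :=
  Disjoint Y₁ Y₂ ∧ Y₁ ⊆ Z.vars ∧ Y₂ ⊆ Z.vars ∧ Z.source ∉ X ∧ Z.sink ∉ X ∧
  ∃ p parts, Z.IsCompPath p ∧ GeneratesPartition X p parts ∧
    (OddEvenSplit parts Y₁ Y₂ ∨ OddEvenSplit parts Y₂ Y₁)

/-! ### Rooted trees -/

/-- A finite rooted tree on (a subset of) the vertex type `V`, given by a parent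
function together with a depth function certifying acyclicity. -/
structure RootedTree (V : Type) [DecidableEq V] where
  verts : Finset V
  root : V
  parent : V → V
  depth : V → ℕ
  root_mem : root ∈ verts
  parent_mem : ∀ v ∈ verts, v ≠ root → parent v ∈ verts
  depth_root : depth root = 0
  depth_parent : ∀ v ∈ verts, v ≠ root → depth v = depth (parent v) + 1

namespace RootedTree

variable {V : Type} [DecidableEq V]

/-- The children of a vertex. -/
def children (T : RootedTree V) (u : V) : Finset V :=
  T.verts.filter (fun v => v ≠ T.root ∧ T.parent v = u)

/-- The leaves of the tree: vertices with no children. -/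
def leaves (T : RootedTree V) : Finset V :=
  T.verts.filter (fun v => T.children v = ∅)

/-- The vertex set of the path from the root to `v` (i.e. `v` and all its ancestors). -/
def pathVerts (T : RootedTree V) (v : V) : Finset V :=
  (Finset.range (T.depth v + 1)).image (fun k => T.parent^[k] v)

/-- The height of the tree: the largest number of vertices on a root-leaf path. -/
def height (T : RootedTree V) : ℕ :=
  (T.verts.sup T.depth) + 1

/-- Every vertex has at most two children. -/
def IsBinary (T : RootedTree V) : Prop :=
  ∀ u ∈ T.verts, (T.children u).card ≤ 2

/-- The tree is extended: none of its leaves has a sibling. -/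
def IsExtended (T : RootedTree V) : Prop :=
  ∀ v ∈ T.verts, v ≠ T.root → T.children v = ∅ → T.children (T.parent v) = {v}

/-- The edge set of the tree (as unordered pairs). -/
def edgeSet (T : RootedTree V) : Finset (Sym2 V) :=
  (T.verts.filter (fun v => v ≠ T.root)).image (fun v => s(v, T.parent v))

end RootedTree

/-! ### Binary-tree-based graphs and pseudoexpanders -/

/-- A binary-tree-based (BTB) graph on the vertex type `V`: an edge-disjoint union of
`m` extended binary rooted trees such that every leaf of one of the trees is a leaf of
exactly two of the trees, any two trees have at most one vertex in common (that vertex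
being a leaf of both), and the roots are pairwise distinct. -/
structure BTB (V : Type) [DecidableEq V] [Fintype V] where
  m : ℕ
  tree : Fin m → RootedTree V
  binary : ∀ i, (tree i).IsBinary
  extended : ∀ i, (tree i).IsExtended
  cover : ∀ v : V, ∃ i, v ∈ (tree i).verts
  edge_disjoint : ∀ i j, i ≠ j → Disjoint ((tree i).edgeSet) ((tree j).edgeSet)
  leaf_two : ∀ i, ∀ v ∈ (tree i).leaves,
    (Finset.univ.filter (fun j => v ∈ (tree j).leaves)).card = 2
  common_le_one : ∀ i j, i ≠ j → ∀ u v,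
    u ∈ (tree i).verts → u ∈ (tree j).verts →
    v ∈ (tree i).verts → v ∈ (tree j).verts → u = v
  common_leaf : ∀ i j, i ≠ j → ∀ v, v ∈ (tree i).verts → v ∈ (tree j).verts →
    v ∈ (tree i).leaves ∧ v ∈ (tree j).leaves
  roots_inj : Function.Injective (fun i => (tree i).root)

namespace BTB

variable {V : Type} [DecidableEq V] [Fintype V]

/-- `ℓ` is the common leaf of the (adjacent) trees `T_i` and `T_j`. -/
def IsCommonLeaf (H : BTB V) (i j : Fin H.m) (ℓ : V) : Prop :=
  i ≠ j ∧ ℓ ∈ (H.tree i).leaves ∧ ℓ ∈ (H.tree j).leaves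

/-- The trees `T_i` and `T_j` are adjacent (share a common leaf); equivalently,
`{t_i, t_j}` is a pseudoedge of `H`. -/
def Adjacent (H : BTB V) (i j : Fin H.m) : Prop :=
  ∃ ℓ, H.IsCommonLeaf i j ℓ

/-- The pseudodegree of the root `t_i`: the number of pseudoedges containing it. -/
noncomputable def pseudodegree (H : BTB V) (i : Fin H.m) : ℕ :=
  (Finset.univ.filter (fun j => H.Adjacent i j)).card

/-- The set of root vertices of `H`. -/
def rootSet (H : BTB V) : Finset V :=
  Finset.univ.image (fun i => (H.tree i).root)

/-- A pseudomatching: a set of pseudoedges (recorded as ordered pairs of root indices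
with `i < j`) no two of which share an end. -/
def IsPseudomatching (H : BTB V) (M : Finset (Fin H.m × Fin H.m)) : Prop :=
  (∀ e ∈ M, e.1 < e.2 ∧ H.Adjacent e.1 e.2) ∧
  ∀ e ∈ M, ∀ f ∈ M, e ≠ f → e.1 ≠ f.1 ∧ e.1 ≠ f.2 ∧ e.2 ≠ f.1 ∧ e.2 ≠ f.2

/-- A pseudomatching between the disjoint sets `U` and `W` of roots (given by their
indices): every pseudoedge of `M` has one end in `U` and the other in `W`. -/
def IsPseudomatchingBetween (H : BTB V) (M : Finset (Fin H.m × Fin H.m))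
    (U W : Finset (Fin H.m)) : Prop :=
  H.IsPseudomatching M ∧ ∀ e ∈ M, (e.1 ∈ U ∧ e.2 ∈ W) ∨ (e.1 ∈ W ∧ e.2 ∈ U)

/-- The set `⋃M` of root vertices matched by the pseudomatching `M`. -/
def matchingRoots (H : BTB V) (M : Finset (Fin H.m × Fin H.m)) : Finset V :=
  M.biUnion (fun e => {(H.tree e.1).root, (H.tree e.2).root})

/-- The vertex set `V(P_{i,j})` of the path connecting the roots `t_i` and `t_j`
through their common leaf `ℓ`. -/
def clauseVerts (H : BTB V) (i j : Fin H.m) (ℓ : V) : Finset V :=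
  (H.tree i).pathVerts ℓ ∪ (H.tree j).pathVerts ℓ

/-- `S` satisfies the monotone CNF `φ_H`. -/
def SatisfiesPhi (H : BTB V) (S : Finset (V × Bool)) : Prop :=
  ∀ i j ℓ, H.IsCommonLeaf i j ℓ → ∃ v ∈ H.clauseVerts i j ℓ, (v, true) ∈ S

/-- `S` falsifies no clause of `φ_H`. -/
def FalsifiesNoClause (H : BTB V) (S : Finset (V × Bool)) : Prop :=
  ∀ i j ℓ, H.IsCommonLeaf i j ℓ → ¬(∀ v ∈ H.clauseVerts i j ℓ, (v, false) ∈ S)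

/-- `H` is a pseudoexpander. -/
def IsPseudoexpander (H : BTB V) : Prop :=
  (∀ i, ((H.tree i).height : ℝ) ≤ Real.logb 2 H.m / 4.9 + 3) ∧
  ∀ U W : Finset (Fin H.m), Disjoint U W →
    (H.m : ℝ) ^ (0.999 : ℝ) ≤ U.card → (H.m : ℝ) ^ (0.999 : ℝ) ≤ W.card →
    ∃ M, H.IsPseudomatchingBetween M U W ∧ (H.m : ℝ) ^ (0.999 : ℝ) / 3 ≤ M.card

/-! #### The probability space on the satisfying assignments of `φ_H` -/

/-- The set `SAT(H)` of satisfying assignments of `φ_H` (total assignments of the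
variables `V(H)` satisfying every clause). -/
noncomputable def SATH (H : BTB V) : Finset (Finset (V × Bool)) :=
  Finset.univ.filter (fun S => AssignsExactly Finset.univ S ∧ H.SatisfiesPhi S)

/-- `Fix(S)`: the set of leaf variables `ℓ_{i,j}` occurring positively in `S` such that
all the other variables of the clause `C_{i,j}` occur negatively in `S`. -/
def Fix (H : BTB V) (S : Finset (V × Bool)) : Set V :=
  {ℓ | ∃ i j, H.IsCommonLeaf i j ℓ ∧ (ℓ, true) ∈ S ∧
      ∀ v ∈ H.clauseVerts i j ℓ, v ≠ ℓ → (v, false) ∈ S}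

/-- The probability weight of `S`: `(1/2) ^ |V(H) \ Fix(S)|`. -/
noncomputable def weight (H : BTB V) (S : Finset (V × Bool)) : ℝ :=
  (1 / 2 : ℝ) ^ (Fintype.card V - (H.Fix S).ncard)

/-- The probability of the event `E` in the probability space on `SAT(H)`. -/
noncomputable def Pr (H : BTB V) (E : Finset (V × Bool) → Prop) : ℝ :=
  ∑ S ∈ H.SATH.filter E, H.weight S

/-- `|S \ Fix(S)|`: the number of literals of `S` that are not fixed. -/
noncomputable def nonFixedCount (H : BTB V) (S : Finset (V × Bool)) : ℕ :=
  (S.filter (fun l => ¬(l.2 = true ∧ l.1 ∈ H.Fix S))).card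

/-- `v` and `w` are siblings (in one of the trees of `H`). -/
def Sibling (H : BTB V) (v w : V) : Prop :=
  ∃ k, v ∈ (H.tree k).verts ∧ w ∈ (H.tree k).verts ∧
    v ≠ (H.tree k).root ∧ w ≠ (H.tree k).root ∧ v ≠ w ∧
    (H.tree k).parent v = (H.tree k).parent w

/-- `S` respects the pseudoedge `{t_i, t_j}`: all non-root variables of `C_{i,j}` occur
negatively in `S` and the siblings of all internal variables of `C_{i,j}` occur
positively in `S`. -/
def Respects (H : BTB V) (i j : Fin H.m) (S : Finset (V × Bool)) : Prop :=
  ∃ ℓ, H.IsCommonLeaf i j ℓ ∧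
    (∀ v ∈ H.clauseVerts i j ℓ,
      v ≠ (H.tree i).root → v ≠ (H.tree j).root → (v, false) ∈ S) ∧
    (∀ v ∈ H.clauseVerts i j ℓ,
      v ≠ (H.tree i).root → v ≠ (H.tree j).root → v ≠ ℓ →
      ∀ w, H.Sibling v w → (w, true) ∈ S)

/-- `S` is `η`-comfortable w.r.t. the pseudomatching `M`: `S` falsifies no clause of
`φ_H` and respects at least `η·|M|` pseudoedges of `M`. -/
noncomputable def Comfortable (H : BTB V) (M : Finset (Fin H.m × Fin H.m)) (η : ℝ)
    (S : Finset (V × Bool)) : Prop :=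
  H.FalsifiesNoClause S ∧
    η * M.card ≤ ((M.filter (fun e => H.Respects e.1 e.2 S)).card : ℝ)

/-- `S` is a guarded set of literals. -/
def Guarded (H : BTB V) (S : Finset (V × Bool)) : Prop :=
  Consistent S ∧ ∀ i j ℓ, H.IsCommonLeaf i j ℓ →
    ((ℓ, true) ∉ S ∧ (ℓ, false) ∉ S) ∨
    (∃ v ∈ H.clauseVerts i j ℓ, v ≠ ℓ ∧ (v, true) ∈ S) ∨
    ((ℓ, true) ∈ S ∧ ∀ v ∈ H.clauseVerts i j ℓ, v ≠ ℓ → (v, false) ∈ S)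

/-! #### Matching CNFs and matching OR-CNFs -/

/-- The 'half clause' `C^{1/2}_{i,j}`: the positive clause on the vertices of the path
from `t_i` (if `side = true`) or from `t_j` (if `side = false`) to the common leaf `ℓ`. -/
def halfClause (H : BTB V) (i j : Fin H.m) (ℓ : V) (side : Bool) : Finset (V × Bool) :=
  (if side then (H.tree i).pathVerts ℓ else (H.tree j).pathVerts ℓ).image (fun v => (v, true))

/-- The matching CNF w.r.t. `M` determined by the side choice `c`: one half clause per
pseudoedge of `M`.  The formulas of `CNF(M)` are exactly the CNFs `matchingCNF H M c`. -/
def matchingCNF (H : BTB V) (M : Finset (Fin H.m × Fin H.m))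
    (c : Fin H.m × Fin H.m → Bool) : Set (Finset (V × Bool)) :=
  {C | ∃ e ∈ M, ∃ ℓ, H.IsCommonLeaf e.1 e.2 ℓ ∧ C = H.halfClause e.1 e.2 ℓ (c e)}

/-- A matching OR-CNF w.r.t. `M` is determined by a map `Ψ` assigning to each assignment
`S₀` of the variables `V(H) \ ⋃M` a matching CNF (given by its side choice `Ψ S₀`);
the formula is `⋁_{S₀} (Conj(S₀) ∧ matchingCNF H M (Ψ S₀))`.  `S` satisfies it iff for
(the) `S₀ ⊆ S`, `S` satisfies the corresponding matching CNF. -/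
def SatORCNF (H : BTB V) (M : Finset (Fin H.m × Fin H.m))
    (Ψ : Finset (V × Bool) → (Fin H.m × Fin H.m) → Bool) (S : Finset (V × Bool)) : Prop :=
  ∃ S₀, AssignsExactly (Finset.univ \ H.matchingRoots M) S₀ ∧ S₀ ⊆ S ∧
    SatCNF (H.matchingCNF M (Ψ S₀)) S

/-- `X` is an `(a, b)`-determining set for the NBP `Z` computing `φ_H`. -/
def IsDeterminingSet (H : BTB V) (Z : NBP V) (a b : ℝ) (X : Finset (Fin Z.n)) : Prop :=
  (X.card : ℝ) ≤ a ∧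
  ∃ M : Finset (Fin H.m × Fin H.m), H.IsPseudomatching M ∧ b ≤ (M.card : ℝ) ∧
    ∃ Ψ : Finset (V × Bool) → (Fin H.m × Fin H.m) → Bool,
      ∀ p, Z.IsCompPath p → X ⊆ pathVertices p → H.SatORCNF M Ψ (pathLits p)

end BTB

/-!
Sample `f : V → Bool` uniformly and set to true every common leaf `ℓ_{i,j}` whose clause
`C_{i,j}` is falsified by `f` (`BTB.repair`). The result satisfies `φ_H`, and it determines `f`
outside `Fix(S)`, so each `S ∈ SAT(H)` is hit with probability at most `(1/2)^|V(H) \ Fix(S)|`: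
events are at least as likely in the probability space on `SAT(H)` as under this sampling.

If `f` is false on the non-root vertices of `P_{i,j}`, true on the siblings of its internal
vertices and true on at least one of the roots, then no leaf of `P_{i,j}` gets repaired and the
result respects `{t_i,t_j}`. This pins down `k` vertices with `3` admissible patterns, so it has
probability `3 · 2^(-k)`. In a binary tree an internal vertex has at most one sibling, hence
`k ≤ 4h - 5` for the larger height `h ≤ log₂ m / 4.9 + 3` of `T_i` and `T_j`, and
`3 · 2^(5 - 4h) ≥ (3/128) · m^(-4/4.9)`.
-/

open Finset Real

theorem card_filter_forall_eq_mul {α β : Type} [Fintype α] [DecidableEq α] [Fintype β]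
    [DecidableEq β] (T : Finset α) (g : α → β) :
    #{f : α → β | ∀ v ∈ T, f v = g v} * Fintype.card β ^ #T =
      Fintype.card β ^ Fintype.card α := by
  have hpi : ({f : α → β | ∀ v ∈ T, f v = g v} : Finset (α → β)) =
      Fintype.piFinset fun v => if v ∈ T then {g v} else univ := by
    ext f
    simp only [mem_filter, mem_univ, true_and, Fintype.mem_piFinset]
    refine forall_congr' fun v => ?_
    split_ifs with hv <;> simp [hv]
  rw [hpi, Fintype.card_piFinset]
  simp only [apply_ite Finset.card, card_singleton, card_univ]
  rw [prod_ite, prod_const_one, prod_const, one_mul, ← pow_add, filter_not, filter_mem_eq_inter,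
    univ_inter, card_sdiff_add_card_eq_card (subset_univ T), card_univ]

theorem card_filter_false_true_or_mul {α : Type} [Fintype α] [DecidableEq α]
    {A B : Finset α} {x y : α} (hAB : Disjoint A B) (hx : x ∉ A ∪ B) (hy : y ∉ A ∪ B)
    (hxy : x ≠ y) :
    #{f : α → Bool | (∀ v ∈ A, f v = false) ∧ (∀ v ∈ B, f v = true) ∧
        (f x = true ∨ f y = true)} * 2 ^ (#A + #B + 2) = 3 * 2 ^ Fintype.card α := by
  set g : α → Bool := fun v => decide (v ∈ B)
  set S₁ : Finset (α → Bool) := {f | ∀ v ∈ A ∪ B, f v = g v}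
  set S₂ : Finset (α → Bool) := {f | ∀ v ∈ insert x (insert y (A ∪ B)), f v = g v}
  have hsplit : ({f | (∀ v ∈ A, f v = false) ∧ (∀ v ∈ B, f v = true) ∧
        (f x = true ∨ f y = true)} : Finset (α → Bool)) = S₁ \ S₂ := by
    ext f
    simp only [mem_union, not_or] at hx hy
    have hA : ∀ v ∈ A, v ∉ B := fun v hv hvB => disjoint_left.mp hAB hv hvB
    simp only [S₁, S₂, g, mem_sdiff, mem_filter, mem_univ, true_and, mem_insert,
      forall_eq_or_imp, mem_union, hx.2, hy.2, decide_false]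
    constructor
    · rintro ⟨hfA, hfB, hxy⟩
      refine ⟨fun v hv => ?_, ?_⟩
      · rcases hv with hv | hv
        · simp [hfA v hv, hA v hv]
        · simp [hfB v hv, hv]
      · rintro ⟨hfx, hfy, -⟩
        simp_all
    · rintro ⟨hf, hxy⟩
      refine ⟨fun v hv => by simpa [hA v hv] using hf v (Or.inl hv),
        fun v hv => by simpa [hv] using hf v (Or.inr hv), ?_⟩
      by_contra h
      simp only [not_or, Bool.not_eq_true] at h
      exact hxy ⟨h.1, h.2, hf⟩
  have hsub : S₂ ⊆ S₁ := fun f hf => by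
    simp only [S₁, S₂, mem_filter, mem_univ, true_and, mem_insert] at hf ⊢
    exact fun v hv => hf v (Or.inr (Or.inr hv))
  have h₁ : #S₁ * 2 ^ (#A + #B) = 2 ^ Fintype.card α := by
    simpa only [card_union_of_disjoint hAB, Fintype.card_bool] using
      card_filter_forall_eq_mul (A ∪ B) g
  have h₂ : #S₂ * 2 ^ (#A + #B + 2) = 2 ^ Fintype.card α := by
    have hx' : x ∉ insert y (A ∪ B) := by simpa [hxy] using hx
    simpa only [card_insert_of_notMem hx', card_insert_of_notMem hy,
      card_union_of_disjoint hAB, Fintype.card_bool] using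
      card_filter_forall_eq_mul (insert x (insert y (A ∪ B))) g
  rw [hsplit, card_sdiff_of_subset hsub, Nat.sub_mul, h₂, pow_add, ← mul_assoc, h₁]
  omega

theorem three_div_128_mul_rpow_le_three_div_two_pow {m t : ℕ} (hm : 0 < m)
    (ht : (t : ℝ) ≤ 4 * (logb 2 m / 4.9 + 3) - 5) :
    3 / 128 * (m : ℝ) ^ (-(4 / 4.9) : ℝ) ≤ 3 / 2 ^ t := by
  have hm' : (0 : ℝ) < m := by exact_mod_cast hm
  have h2t : (2 : ℝ) ^ t ≤ 128 * (m : ℝ) ^ (4 / 4.9 : ℝ) := by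
    calc (2 : ℝ) ^ t = 2 ^ (t : ℝ) := (rpow_natCast 2 t).symm
      _ ≤ 2 ^ ((7 : ℝ) + logb 2 m * (4 / 4.9)) :=
        rpow_le_rpow_of_exponent_le (by norm_num) (by norm_num at ht ⊢; linarith)
      _ = 128 * (m : ℝ) ^ (4 / 4.9 : ℝ) := by
        rw [rpow_add two_pos, rpow_mul zero_le_two, rpow_logb two_pos (by norm_num) hm']
        norm_num
  calc 3 / 128 * (m : ℝ) ^ (-(4 / 4.9) : ℝ) = 3 / (128 * (m : ℝ) ^ (4 / 4.9 : ℝ)) := by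
        rw [rpow_neg hm'.le]; ring
    _ ≤ 3 / 2 ^ t := div_le_div_of_nonneg_left (by norm_num) (by positivity) h2t

namespace RootedTree

variable {V : Type} [DecidableEq V] (T : RootedTree V)

theorem leaves_subset_verts : T.leaves ⊆ T.verts := filter_subset _ _

theorem mem_children_parent {v : V} (hv : v ∈ T.verts) (hr : v ≠ T.root) :
    v ∈ T.children (T.parent v) :=
  mem_filter.2 ⟨hv, hr, rfl⟩

theorem iterate_parent_mem_and_depth_add {v : V} (hv : v ∈ T.verts) {k : ℕ}
    (hk : k ≤ T.depth v) :
    T.parent^[k] v ∈ T.verts ∧ T.depth (T.parent^[k] v) + k = T.depth v := by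
  induction k with
  | zero => exact ⟨hv, rfl⟩
  | succ k ih =>
    obtain ⟨hmem, hdepth⟩ := ih (Nat.le_of_succ_le hk)
    have hroot : T.parent^[k] v ≠ T.root := by
      rintro h
      rw [h, T.depth_root] at hdepth
      omega
    have := T.depth_parent _ hmem hroot
    rw [Function.iterate_succ_apply']
    exact ⟨T.parent_mem _ hmem hroot, by omega⟩

theorem eq_root_of_depth_eq_zero {v : V} (hv : v ∈ T.verts) (h : T.depth v = 0) :
    v = T.root := by
  by_contra hne
  have := T.depth_parent v hv hne
  omega

theorem mem_pathVerts {u v : V} : u ∈ T.pathVerts v ↔ ∃ k ≤ T.depth v, T.parent^[k] v = u := by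
  simp [pathVerts]

theorem self_mem_pathVerts (v : V) : v ∈ T.pathVerts v :=
  T.mem_pathVerts.2 ⟨0, Nat.zero_le _, rfl⟩

theorem pathVerts_subset_verts {v : V} (hv : v ∈ T.verts) : T.pathVerts v ⊆ T.verts := by
  intro u hu
  obtain ⟨k, hk, rfl⟩ := T.mem_pathVerts.1 hu
  exact (T.iterate_parent_mem_and_depth_add hv hk).1

theorem root_mem_pathVerts {v : V} (hv : v ∈ T.verts) : T.root ∈ T.pathVerts v := by
  obtain ⟨hmem, hdepth⟩ := T.iterate_parent_mem_and_depth_add hv le_rfl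
  exact T.mem_pathVerts.2 ⟨_, le_rfl, T.eq_root_of_depth_eq_zero hmem (by omega)⟩

theorem pathVerts_root : T.pathVerts T.root = {T.root} := by
  simp [pathVerts, T.depth_root]

theorem card_pathVerts_le_height {v : V} (hv : v ∈ T.verts) : #(T.pathVerts v) ≤ T.height :=
  card_image_le.trans (by rw [card_range, height]; exact Nat.succ_le_succ (le_sup hv))

theorem notMem_leaves_of_mem_pathVerts {u v : V} (hv : v ∈ T.verts) (hu : u ∈ T.pathVerts v)
    (hne : u ≠ v) : u ∉ T.leaves := by
  obtain ⟨k, hk, rfl⟩ := T.mem_pathVerts.1 hu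
  obtain _ | k := k
  · exact absurd rfl hne
  obtain ⟨hmem, hdepth⟩ := T.iterate_parent_mem_and_depth_add hv (Nat.le_of_succ_le hk)
  have hroot : T.parent^[k] v ≠ T.root := by
    rintro h
    rw [h, T.depth_root] at hdepth
    omega
  intro hleaf
  have hchild := T.mem_children_parent hmem hroot
  rw [← Function.iterate_succ_apply' T.parent, (mem_filter.1 hleaf).2] at hchild
  exact notMem_empty _ hchild

theorem eq_of_parent_eq_of_mem_pathVerts {ℓ v w : V} (hℓ : ℓ ∈ T.verts)
    (hv : v ∈ T.pathVerts ℓ) (hw : w ∈ T.pathVerts ℓ) (hvr : v ≠ T.root) (hwr : w ≠ T.root)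
    (h : T.parent v = T.parent w) : v = w := by
  obtain ⟨s, hs, rfl⟩ := T.mem_pathVerts.1 hv
  obtain ⟨t, ht, rfl⟩ := T.mem_pathVerts.1 hw
  obtain ⟨hvm, hvd⟩ := T.iterate_parent_mem_and_depth_add hℓ hs
  obtain ⟨hwm, hwd⟩ := T.iterate_parent_mem_and_depth_add hℓ ht
  have hv' := T.depth_parent _ hvm hvr
  have hw' := T.depth_parent _ hwm hwr
  rw [h] at hv'
  obtain rfl : s = t := by omega
  rfl

theorem IsExtended.notMem_leaves_of_parent_eq {T : RootedTree V} (hT : T.IsExtended) {v w : V}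
    (hv : v ∈ T.verts) (hw : w ∈ T.verts) (hvr : v ≠ T.root) (hwr : w ≠ T.root) (hvw : v ≠ w)
    (h : T.parent v = T.parent w) : w ∉ T.leaves := by
  intro hleaf
  have hchild := T.mem_children_parent hv hvr
  rw [h, hT w hw hwr (mem_filter.1 hleaf).2, mem_singleton] at hchild
  exact hvw hchild

theorem IsBinary.card_erase_children_parent_le_one {T : RootedTree V} (hT : T.IsBinary)
    {v : V} (hv : v ∈ T.verts) (hr : v ≠ T.root) : #((T.children (T.parent v)).erase v) ≤ 1 := by
  rw [card_erase_of_mem (T.mem_children_parent hv hr)]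
  have := hT _ (T.parent_mem v hv hr)
  omega

end RootedTree

variable {V : Type} [DecidableEq V] [Fintype V]

def lits (f : V → Bool) : Finset (V × Bool) := univ.image fun v => (v, f v)

theorem mem_lits {f : V → Bool} {v : V} {b : Bool} : (v, b) ∈ lits f ↔ f v = b := by
  simp [lits]

theorem assignsExactly_lits (f : V → Bool) : AssignsExactly univ (lits f) :=
  ⟨fun _ _ => mem_univ _, fun x _ => ⟨f x, mem_lits.2 rfl, fun _ hb => (mem_lits.1 hb).symm⟩⟩

namespace BTB

variable (H : BTB V)

theorem eq_of_mem_verts_of_notMem_leaves {a b : Fin H.m} {v : V} (hva : v ∈ (H.tree a).verts)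
    (hvl : v ∉ (H.tree a).leaves) (hvb : v ∈ (H.tree b).verts) : b = a := by
  by_contra hne
  exact hvl (H.common_leaf a b (Ne.symm hne) v hva hvb).1

theorem exists_mem_pathVerts_of_mem_clauseVerts {i j : Fin H.m} {ℓ v : V}
    (hcl : H.IsCommonLeaf i j ℓ) (hv : v ∈ H.clauseVerts i j ℓ) :
    ∃ a, (a = i ∨ a = j) ∧ ℓ ∈ (H.tree a).leaves ∧ v ∈ (H.tree a).pathVerts ℓ := by
  rcases mem_union.1 hv with h | h
  exacts [⟨i, Or.inl rfl, hcl.2.1, h⟩, ⟨j, Or.inr rfl, hcl.2.2, h⟩]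

theorem root_left_mem_clauseVerts {i j : Fin H.m} {ℓ : V} (hcl : H.IsCommonLeaf i j ℓ) :
    (H.tree i).root ∈ H.clauseVerts i j ℓ :=
  mem_union_left _ ((H.tree i).root_mem_pathVerts ((H.tree i).leaves_subset_verts hcl.2.1))

theorem root_right_mem_clauseVerts {i j : Fin H.m} {ℓ : V} (hcl : H.IsCommonLeaf i j ℓ) :
    (H.tree j).root ∈ H.clauseVerts i j ℓ :=
  mem_union_right _ ((H.tree j).root_mem_pathVerts ((H.tree j).leaves_subset_verts hcl.2.2))

theorem not_isCommonLeaf_of_mem_clauseVerts {i j : Fin H.m} {ℓ v : V}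
    (hcl : H.IsCommonLeaf i j ℓ) (hv : v ∈ H.clauseVerts i j ℓ) (hne : v ≠ ℓ) (c d : Fin H.m) :
    ¬H.IsCommonLeaf c d v := by
  obtain ⟨a, -, hℓ, hva⟩ := H.exists_mem_pathVerts_of_mem_clauseVerts hcl hv
  have hℓ' := (H.tree a).leaves_subset_verts hℓ
  have hvl := (H.tree a).notMem_leaves_of_mem_pathVerts hℓ' hva hne
  rintro ⟨-, hc, -⟩
  obtain rfl := H.eq_of_mem_verts_of_notMem_leaves ((H.tree a).pathVerts_subset_verts hℓ' hva)
    hvl ((H.tree c).leaves_subset_verts hc)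
  exact hvl hc

theorem clauseVerts_eq_of_isCommonLeaf {i j c d : Fin H.m} {ℓ : V}
    (hij : H.IsCommonLeaf i j ℓ) (hcd : H.IsCommonLeaf c d ℓ) :
    H.clauseVerts c d ℓ = H.clauseVerts i j ℓ := by
  set F : Finset (Fin H.m) := {k | ℓ ∈ (H.tree k).leaves}
  have hF : ({i, j} : Finset (Fin H.m)) = F := by
    refine eq_of_subset_of_card_le (fun k hk => ?_) ?_
    · rcases mem_insert.1 hk with rfl | hk
      · exact mem_filter.2 ⟨mem_univ _, hij.2.1⟩
      · exact mem_filter.2 ⟨mem_univ _, mem_singleton.1 hk ▸ hij.2.2⟩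
    · rw [H.leaf_two i ℓ hij.2.1, card_pair hij.1]
  have hc : c ∈ ({i, j} : Finset (Fin H.m)) := hF ▸ mem_filter.2 ⟨mem_univ _, hcd.2.1⟩
  have hd : d ∈ ({i, j} : Finset (Fin H.m)) := hF ▸ mem_filter.2 ⟨mem_univ _, hcd.2.2⟩
  simp only [mem_insert, mem_singleton] at hc hd
  rcases hc with rfl | rfl <;> rcases hd with rfl | rfl
  · exact absurd rfl hcd.1
  · rfl
  · exact union_comm _ _
  · exact absurd rfl hcd.1

noncomputable def repair (f : V → Bool) : V → Bool := fun v =>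
  f v || decide (∃ i j, H.IsCommonLeaf i j v ∧ ∀ u ∈ H.clauseVerts i j v, f u = false)

variable {H}

theorem repair_eq_true {f : V → Bool} {v : V} (h : f v = true) : H.repair f v = true := by
  simp [repair, h]

theorem repair_of_not_isCommonLeaf {f : V → Bool} {v : V} (h : ∀ i j, ¬H.IsCommonLeaf i j v) :
    H.repair f v = f v := by
  simp [repair, h]

theorem repair_of_exists_mem_clauseVerts {f : V → Bool} {i j : Fin H.m} {ℓ : V}
    (hcl : H.IsCommonLeaf i j ℓ) (h : ∃ u ∈ H.clauseVerts i j ℓ, f u = true) :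
    H.repair f ℓ = f ℓ := by
  obtain ⟨u, hu, hfu⟩ := h
  rw [repair, decide_eq_false, Bool.or_false]
  rintro ⟨c, d, hcd, hall⟩
  rw [H.clauseVerts_eq_of_isCommonLeaf hcl hcd] at hall
  simp [hall u hu] at hfu

variable (H)

theorem satisfiesPhi_lits_repair (f : V → Bool) : H.SatisfiesPhi (lits (H.repair f)) := by
  intro i j ℓ hcl
  by_cases h : ∃ u ∈ H.clauseVerts i j ℓ, f u = true
  · obtain ⟨u, hu, hfu⟩ := h
    exact ⟨u, hu, mem_lits.2 (repair_eq_true hfu)⟩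
  · simp only [not_exists, not_and, Bool.not_eq_true] at h
    refine ⟨ℓ, mem_union_left _ ((H.tree i).self_mem_pathVerts ℓ), mem_lits.2 ?_⟩
    simp only [repair, Bool.or_eq_true, decide_eq_true_eq]
    exact Or.inr ⟨i, j, hcl, h⟩

theorem lits_repair_mem_SATH (f : V → Bool) : lits (H.repair f) ∈ H.SATH :=
  mem_filter.2 ⟨mem_univ _, assignsExactly_lits _, H.satisfiesPhi_lits_repair f⟩

theorem repair_of_notMem_Fix {f : V → Bool} {v : V} (hv : v ∉ H.Fix (lits (H.repair f))) :
    H.repair f v = f v := by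
  by_contra hne
  obtain ⟨i, j, hcl, hall⟩ :
      ∃ i j, H.IsCommonLeaf i j v ∧ ∀ u ∈ H.clauseVerts i j v, f u = false := by
    by_contra h
    exact hne (by simp [repair, h])
  refine hv ⟨i, j, hcl, mem_lits.2 ?_, fun u hu huv => mem_lits.2 ?_⟩
  · simp only [repair, Bool.or_eq_true, decide_eq_true_eq]
    exact Or.inr ⟨i, j, hcl, hall⟩
  · rw [repair_of_not_isCommonLeaf (H.not_isCommonLeaf_of_mem_clauseVerts hcl hu huv), hall u hu]

theorem card_fiber_repair_div_le_weight (S : Finset (V × Bool)) :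
    (#{f : V → Bool | lits (H.repair f) = S} : ℝ) / 2 ^ Fintype.card V ≤ H.weight S := by
  have hT : #(H.Fix S)ᶜ.toFinset = Fintype.card V - (H.Fix S).ncard := by
    rw [Set.toFinset_compl, card_compl, Set.ncard_eq_toFinset_card']
  set T := (H.Fix S)ᶜ.toFinset
  set s : V → Bool := fun v => decide ((v, true) ∈ S)
  have hsub : ({f | lits (H.repair f) = S} : Finset (V → Bool)) ⊆
      ({f : V → Bool | ∀ v ∈ T, f v = s v} : Finset (V → Bool)) := by
    intro f hf
    simp only [mem_filter, mem_univ, true_and, T, Set.mem_toFinset, Set.mem_compl_iff] at hf ⊢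
    intro v hv
    subst hf
    rw [← H.repair_of_notMem_Fix hv]
    simp [s, mem_lits]
  have hcount : (#{f : V → Bool | ∀ v ∈ T, f v = s v} : ℝ) * 2 ^ #T = 2 ^ Fintype.card V := by
    exact_mod_cast card_filter_forall_eq_mul T s
  calc (#{f : V → Bool | lits (H.repair f) = S} : ℝ) / 2 ^ Fintype.card V
      ≤ #{f : V → Bool | ∀ v ∈ T, f v = s v} / 2 ^ Fintype.card V := by
        gcongr
    _ = H.weight S := by
        rw [weight, ← hT, div_eq_iff (by positivity), ← hcount, mul_left_comm, ← mul_pow]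
        norm_num

theorem card_filter_repair_div_le_Pr (E : Finset (V × Bool) → Prop) :
    (#{f : V → Bool | E (lits (H.repair f))} : ℝ) / 2 ^ Fintype.card V ≤ H.Pr E := by
  have hmaps : ∀ f ∈ ({f : V → Bool | E (lits (H.repair f))} : Finset (V → Bool)),
      lits (H.repair f) ∈ H.SATH.filter E :=
    fun f hf => mem_filter.2 ⟨H.lits_repair_mem_SATH f, (mem_filter.1 hf).2⟩
  rw [card_eq_sum_card_fiberwise hmaps, Nat.cast_sum, sum_div, Pr]
  refine sum_le_sum fun S _ => le_trans ?_ (H.card_fiber_repair_div_le_weight S)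
  gcongr
  exact filter_subset _ _

def clauseNonRootVerts (i j : Fin H.m) (ℓ : V) : Finset V :=
  H.clauseVerts i j ℓ \ {(H.tree i).root, (H.tree j).root}

def clauseInternalVerts (i j : Fin H.m) (ℓ : V) : Finset V :=
  (H.clauseNonRootVerts i j ℓ).erase ℓ

noncomputable def clauseSiblings (i j : Fin H.m) (ℓ : V) : Finset V :=
  (H.clauseInternalVerts i j ℓ).biUnion fun v => {w | H.Sibling v w}

theorem mem_erase_children_parent_of_sibling {a : Fin H.m} {v w : V}
    (hv : v ∈ (H.tree a).verts) (hvl : v ∉ (H.tree a).leaves) (h : H.Sibling v w) :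
    w ∈ ((H.tree a).children ((H.tree a).parent v)).erase v := by
  obtain ⟨k, hvk, hwk, -, hwr, hvw, hp⟩ := h
  obtain rfl := H.eq_of_mem_verts_of_notMem_leaves hv hvl hvk
  rw [hp]
  exact mem_erase.2 ⟨Ne.symm hvw, (H.tree k).mem_children_parent hwk hwr⟩

theorem exists_tree_of_mem_clauseInternalVerts {i j : Fin H.m} {ℓ v : V}
    (hcl : H.IsCommonLeaf i j ℓ) (hv : v ∈ H.clauseInternalVerts i j ℓ) :
    ∃ a, ℓ ∈ (H.tree a).verts ∧ v ∈ (H.tree a).pathVerts ℓ ∧ v ∉ (H.tree a).leaves ∧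
      v ≠ (H.tree a).root := by
  simp only [clauseInternalVerts, clauseNonRootVerts, mem_erase, mem_sdiff, mem_insert,
    mem_singleton, not_or] at hv
  obtain ⟨hvℓ, hv, hvi, hvj⟩ := hv
  obtain ⟨a, ha, hℓ, hva⟩ := H.exists_mem_pathVerts_of_mem_clauseVerts hcl hv
  have hℓ' := (H.tree a).leaves_subset_verts hℓ
  refine ⟨a, hℓ', hva, (H.tree a).notMem_leaves_of_mem_pathVerts hℓ' hva hvℓ, ?_⟩
  rcases ha with rfl | rfl <;> assumption

theorem card_clauseSiblings_le {i j : Fin H.m} {ℓ : V} (hcl : H.IsCommonLeaf i j ℓ) :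
    #(H.clauseSiblings i j ℓ) ≤ #(H.clauseInternalVerts i j ℓ) := by
  refine (card_biUnion_le_card_mul _ _ 1 fun v hv => ?_).trans (mul_one _).le
  obtain ⟨a, hℓ, hva, hvl, hvr⟩ := H.exists_tree_of_mem_clauseInternalVerts hcl hv
  have hv' := (H.tree a).pathVerts_subset_verts hℓ hva
  exact (card_le_card fun w hw => H.mem_erase_children_parent_of_sibling hv' hvl
    (mem_filter.1 hw).2).trans ((H.binary a).card_erase_children_parent_le_one hv' hvr)

theorem disjoint_clauseVerts_clauseSiblings {i j : Fin H.m} {ℓ : V}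
    (hcl : H.IsCommonLeaf i j ℓ) : Disjoint (H.clauseVerts i j ℓ) (H.clauseSiblings i j ℓ) := by
  refine disjoint_right.2 fun w hw hwC => ?_
  obtain ⟨v, hv, hsib⟩ : ∃ v ∈ H.clauseInternalVerts i j ℓ, H.Sibling v w := by
    simpa [clauseSiblings] using hw
  obtain ⟨a, hℓ, hva, hvl, hvr⟩ := H.exists_tree_of_mem_clauseInternalVerts hcl hv
  have hwc := H.mem_erase_children_parent_of_sibling
    ((H.tree a).pathVerts_subset_verts hℓ hva) hvl hsib
  simp only [mem_erase, RootedTree.children, mem_filter] at hwc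
  obtain ⟨hwv, hwa, hwr, hp⟩ := hwc
  obtain ⟨c, -, hℓc, hwc⟩ := H.exists_mem_pathVerts_of_mem_clauseVerts hcl hwC
  have hwl := (H.extended a).notMem_leaves_of_parent_eq
    ((H.tree a).pathVerts_subset_verts hℓ hva) hwa hvr hwr (Ne.symm hwv) hp.symm
  obtain rfl := H.eq_of_mem_verts_of_notMem_leaves hwa hwl
    ((H.tree c).pathVerts_subset_verts ((H.tree c).leaves_subset_verts hℓc) hwc)
  exact hwv ((H.tree c).eq_of_parent_eq_of_mem_pathVerts hℓ hwc hva hwr hvr hp)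

theorem respects_lits_repair {i j : Fin H.m} {ℓ : V} (hcl : H.IsCommonLeaf i j ℓ)
    {f : V → Bool} (hA : ∀ v ∈ H.clauseNonRootVerts i j ℓ, f v = false)
    (hB : ∀ w ∈ H.clauseSiblings i j ℓ, f w = true)
    (hr : f (H.tree i).root = true ∨ f (H.tree j).root = true) :
    H.Respects i j (lits (H.repair f)) := by
  have hsat : ∃ u ∈ H.clauseVerts i j ℓ, f u = true := by
    rcases hr with h | h
    exacts [⟨_, H.root_left_mem_clauseVerts hcl, h⟩, ⟨_, H.root_right_mem_clauseVerts hcl, h⟩]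
  refine ⟨ℓ, hcl, fun v hv hvi hvj => mem_lits.2 ?_,
    fun v hv hvi hvj hvℓ w hsib => mem_lits.2 (repair_eq_true (hB w ?_))⟩
  · have hfv := hA v (by simp [clauseNonRootVerts, hv, hvi, hvj])
    by_cases hvℓ : v = ℓ
    · subst hvℓ
      rw [repair_of_exists_mem_clauseVerts hcl hsat, hfv]
    · rw [repair_of_not_isCommonLeaf (H.not_isCommonLeaf_of_mem_clauseVerts hcl hv hvℓ), hfv]
  · simp only [clauseSiblings, mem_biUnion, mem_filter, mem_univ, true_and]
    exact ⟨v, by simp [clauseInternalVerts, clauseNonRootVerts, hv, hvi, hvj, hvℓ], hsib⟩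

theorem card_clauseNonRootVerts_add_two {i j : Fin H.m} {ℓ : V} (hcl : H.IsCommonLeaf i j ℓ) :
    #(H.clauseNonRootVerts i j ℓ) + 2 = #(H.clauseVerts i j ℓ) := by
  have hroots : {(H.tree i).root, (H.tree j).root} ⊆ H.clauseVerts i j ℓ :=
    insert_subset_iff.2 ⟨H.root_left_mem_clauseVerts hcl,
      singleton_subset_iff.2 (H.root_right_mem_clauseVerts hcl)⟩
  rw [clauseNonRootVerts, ← card_sdiff_add_card_eq_card hroots,
    card_pair fun h => hcl.1 (H.roots_inj h)]

theorem card_clauseVerts_add_one_le (i j : Fin H.m) (ℓ : V) :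
    #(H.clauseVerts i j ℓ) + 1 ≤ #((H.tree i).pathVerts ℓ) + #((H.tree j).pathVerts ℓ) := by
  have hinter : 1 ≤ #((H.tree i).pathVerts ℓ ∩ (H.tree j).pathVerts ℓ) :=
    card_pos.2 ⟨ℓ, mem_inter.2 ⟨(H.tree i).self_mem_pathVerts ℓ, (H.tree j).self_mem_pathVerts ℓ⟩⟩
  have := card_union_add_card_inter ((H.tree i).pathVerts ℓ) ((H.tree j).pathVerts ℓ)
  rw [clauseVerts]
  omega

theorem card_clauseNonRootVerts_add_card_clauseSiblings_add_seven_le {i j : Fin H.m} {ℓ : V}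
    (hcl : H.IsCommonLeaf i j ℓ) :
    #(H.clauseNonRootVerts i j ℓ) + #(H.clauseSiblings i j ℓ) + 7 ≤
      4 * max (H.tree i).height (H.tree j).height := by
  have hA := H.card_clauseNonRootVerts_add_two hcl
  have hCV := H.card_clauseVerts_add_one_le i j ℓ
  have hSib := H.card_clauseSiblings_le hcl
  have hI : #(H.clauseInternalVerts i j ℓ) ≤ #(H.clauseNonRootVerts i j ℓ) := card_erase_le
  have hPi := (H.tree i).card_pathVerts_le_height ((H.tree i).leaves_subset_verts hcl.2.1)
  have hPj := (H.tree j).card_pathVerts_le_height ((H.tree j).leaves_subset_verts hcl.2.2)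
  have := le_max_left (H.tree i).height (H.tree j).height
  have := le_max_right (H.tree i).height (H.tree j).height
  by_cases hℓA : ℓ ∈ H.clauseNonRootVerts i j ℓ
  · have := card_erase_add_one hℓA
    rw [← clauseInternalVerts] at this
    omega
  · -- `ℓ` is a root, so one of the two root-leaf paths is the single vertex `ℓ`
    have hℓroot : ℓ = (H.tree i).root ∨ ℓ = (H.tree j).root := by
      by_contra h
      rw [not_or] at h
      exact hℓA (mem_sdiff.2 ⟨mem_union_left _ ((H.tree i).self_mem_pathVerts ℓ), by simpa using h⟩)
    have hP : #((H.tree i).pathVerts ℓ) = 1 ∨ #((H.tree j).pathVerts ℓ) = 1 := by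
      rcases hℓroot with h | h
      · left; simp [h, RootedTree.pathVerts_root]
      · right; simp [h, RootedTree.pathVerts_root]
    omega

theorem card_filter_respecting_pattern_mul {i j : Fin H.m} {ℓ : V}
    (hcl : H.IsCommonLeaf i j ℓ) :
    #{f : V → Bool | (∀ v ∈ H.clauseNonRootVerts i j ℓ, f v = false) ∧
        (∀ w ∈ H.clauseSiblings i j ℓ, f w = true) ∧
        (f (H.tree i).root = true ∨ f (H.tree j).root = true)} *
      2 ^ (#(H.clauseNonRootVerts i j ℓ) + #(H.clauseSiblings i j ℓ) + 2) =
      3 * 2 ^ Fintype.card V := by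
  have hdisj := H.disjoint_clauseVerts_clauseSiblings hcl
  have hroot {r : V} (hr : r ∈ H.clauseVerts i j ℓ)
      (hr' : r = (H.tree i).root ∨ r = (H.tree j).root) :
      r ∉ H.clauseNonRootVerts i j ℓ ∪ H.clauseSiblings i j ℓ := by
    simp only [mem_union, not_or]
    exact ⟨fun h => (mem_sdiff.1 h).2 (by simpa using hr'), disjoint_left.1 hdisj hr⟩
  exact card_filter_false_true_or_mul (hdisj.mono_left sdiff_subset)
    (hroot (H.root_left_mem_clauseVerts hcl) (Or.inl rfl))
    (hroot (H.root_right_mem_clauseVerts hcl) (Or.inr rfl)) fun h => hcl.1 (H.roots_inj h)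

variable {H} in
theorem IsPseudoexpander.card_clauseNonRootVerts_add_card_clauseSiblings_le
    (hH : H.IsPseudoexpander) {i j : Fin H.m} {ℓ : V} (hcl : H.IsCommonLeaf i j ℓ) :
    ((#(H.clauseNonRootVerts i j ℓ) + #(H.clauseSiblings i j ℓ) + 2 : ℕ) : ℝ) ≤
      4 * (logb 2 H.m / 4.9 + 3) - 5 := by
  have hheight : ((max (H.tree i).height (H.tree j).height : ℕ) : ℝ) ≤ logb 2 H.m / 4.9 + 3 := by
    rw [Nat.cast_max]
    exact max_le (hH.1 i) (hH.1 j)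
  have hcard : ((#(H.clauseNonRootVerts i j ℓ) + #(H.clauseSiblings i j ℓ) + 7 : ℕ) : ℝ) ≤
      4 * ((max (H.tree i).height (H.tree j).height : ℕ) : ℝ) := by
    exact_mod_cast H.card_clauseNonRootVerts_add_card_clauseSiblings_add_seven_le hcl
  push_cast at hcard hheight ⊢
  linarith

end BTB

/-- for any pseudoedge `{t_i,t_j}` of a pseudoexpander `H`, the
probability that a random satisfying assignment respects `{t_i,t_j}` is at least
`(3/128)·m^(−4/4.9)`. -/
theorem statement_8 (V : Type) [DecidableEq V] [Fintype V] (H : BTB V)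
    (hH : H.IsPseudoexpander) (i j : Fin H.m) (hij : H.Adjacent i j) :
    (3 / 128 : ℝ) * (H.m : ℝ) ^ (-(4 / 4.9) : ℝ) ≤
      H.Pr (fun S => H.Respects i j S) := by
  obtain ⟨ℓ, hcl⟩ := hij
  set A := H.clauseNonRootVerts i j ℓ
  set B := H.clauseSiblings i j ℓ
  calc (3 / 128 : ℝ) * (H.m : ℝ) ^ (-(4 / 4.9) : ℝ) ≤ 3 / 2 ^ (#A + #B + 2) :=
        three_div_128_mul_rpow_le_three_div_two_pow i.pos
          (hH.card_clauseNonRootVerts_add_card_clauseSiblings_le hcl)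
    _ = #{f : V → Bool | (∀ v ∈ A, f v = false) ∧ (∀ w ∈ B, f w = true) ∧
          (f (H.tree i).root = true ∨ f (H.tree j).root = true)} / 2 ^ Fintype.card V := by
        rw [div_eq_div_iff (by positivity) (by positivity)]
        exact_mod_cast (H.card_filter_respecting_pattern_mul hcl).symm
    _ ≤ #{f : V → Bool | H.Respects i j (lits (H.repair f))} / 2 ^ Fintype.card V := by
        gcongr with f
        exact fun ⟨hA, hB, hr⟩ => H.respects_lits_repair hcl hA hB hr
    _ ≤ H.Pr (fun S => H.Respects i j S) := H.card_filter_repair_div_le_Pr _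

end NBPPaper
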